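/- Suppose either (a) sup_{v>0} F(v) > 0 and, with α₀ := (2 sup_{v>0} F(v))^{1/2}, one has α > α₀, or α = α₀ together with α₀² > 2F(v) for all v > 0; or (b) sup_{v>0} F(v) ≤ 0. Set ℓ := ∫₀^∞ dr/√(α² − 2F(r)) ∈ (0,∞]. Then the stationary problem (E): v'' + f(v) = 0, v(0) = 0, v'(0) = α, has a unique solution V̂_α; it is defined exactly on [0,ℓ), satisfies V̂_α'(x) > 0 for all x ∈ [0,ℓ), and V̂_α(x) → ∞ as x → ℓ. -/

import Mathlib

/-!
By the first integral, a solution moves with speed `g(v) = √(α² - 2F(v))` at position `v`, and the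
case hypotheses make `g` positive on `[0, ∞)`. So `V̂_α` is obtained by separation
of variables as the inverse of the travel time `X(v) = ∫₀^v dr / g(r)`, an increasing bijection
from `[0, ∞)` onto `[0, ℓ)`; in particular `V̂_α → ∞` at `ℓ`. Conversely, any solution `W`
keeps the energy `(W')² + 2F(W) = α²` while `W ≥ 0`, so `W'` cannot vanish, `W' = g(W)`,
and `X ∘ W` is the identity.
-/

open Set Filter Topology MeasureTheory
open scoped ENNReal

noncomputable section

def Fint (f : ℝ → ℝ) (v : ℝ) : ℝ := ∫ s in (0:ℝ)..v, f s

theorem hasDerivAt_Fint {f : ℝ → ℝ} (hf : Continuous f) (v : ℝ) :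
    HasDerivAt (Fint f) (f v) v :=
  intervalIntegral.integral_hasDerivAt_right (hf.intervalIntegrable _ _)
    hf.aestronglyMeasurable.stronglyMeasurableAtFilter hf.continuousAt

theorem eq_of_hasDerivAt_zero_on_Icc {φ : ℝ → ℝ} {a b : ℝ}
    (h : ∀ y ∈ Icc a b, HasDerivAt φ 0 y) : ∀ y ∈ Icc a b, φ y = φ a :=
  constant_of_has_deriv_right_zero (fun y hy => (h y hy).continuousAt.continuousWithinAt)
    fun y hy => (h y (Ico_subset_Icc_self hy)).hasDerivWithinAt

theorem pos_on_Icc_of_ne_zero_of_nonneg_before {φ : ℝ → ℝ} {a b : ℝ}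
    (hφ : ContinuousOn φ (Icc a b)) (ha : 0 < φ a)
    (h : ∀ s ∈ Icc a b, (∀ y ∈ Icc a s, 0 ≤ φ y) → φ s ≠ 0) : ∀ y ∈ Icc a b, 0 < φ y := by
  by_contra! ⟨y, hy, hφy⟩
  set Z := Icc a b ∩ φ ⁻¹' Iic 0
  have hbdd : BddBelow Z := ⟨a, fun z hz => hz.1.1⟩
  have hs : sInf Z ∈ Z :=
    (hφ.preimage_isClosed_of_isClosed isClosed_Icc isClosed_Iic).csInf_mem ⟨y, hy, hφy⟩ hbdd
  obtain ⟨z, hz, hφz⟩ := intermediate_value_Icc' hs.1.1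
    (hφ.mono (Icc_subset_Icc_right hs.1.2)) ⟨hs.2, ha.le⟩
  have hzs : z = sInf Z :=
    le_antisymm hz.2 (csInf_le hbdd ⟨⟨hz.1, hz.2.trans hs.1.2⟩, hφz.le⟩)
  refine h _ hs.1 (fun t ht => ?_) (hzs ▸ hφz)
  rcases ht.2.lt_or_eq with hlt | rfl
  · by_contra! hneg
    exact (csInf_le hbdd ⟨⟨ht.1, hlt.le.trans hs.1.2⟩, hneg.le⟩).not_gt hlt
  · exact (hzs ▸ hφz).ge

theorem energy_eq_of_hasDerivAt {W W' f F : ℝ → ℝ} {a b : ℝ}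
    (hW : ∀ y ∈ Icc a b, HasDerivAt W (W' y) y)
    (hW' : ∀ y ∈ Icc a b, HasDerivAt W' (-f (W y)) y)
    (hF : ∀ y ∈ Icc a b, HasDerivAt F (f (W y)) (W y)) :
    ∀ y ∈ Icc a b, W' y ^ 2 + 2 * F (W y) = W' a ^ 2 + 2 * F (W a) :=
  eq_of_hasDerivAt_zero_on_Icc fun y hy =>
    (((hW' y hy).fun_pow 2).add (((hF y hy).comp y (hW y hy)).const_mul 2)).congr_deriv (by ring)

theorem isOpen_range_of_strictMono {φ : ℝ → ℝ} (hc : Continuous φ) (hm : StrictMono φ) :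
    IsOpen (range φ) := by
  rw [isOpen_iff_mem_nhds]
  rintro _ ⟨v, rfl⟩
  refine mem_of_superset (Ioo_mem_nhds (hm (sub_one_lt v)) (hm (lt_add_one v))) ?_
  exact (intermediate_value_Ioo (by linarith) hc.continuousOn).trans (image_subset_range _ _)

/-- The time `∫₀^v dr / g(r)` that the solution of `u' = g(u)`, `u(0) = 0` needs to reach `v`. -/
def travelTime (g : ℝ → ℝ) : ℝ → ℝ := Fint fun r => (g r)⁻¹

def separatedSolution (g : ℝ → ℝ) : ℝ → ℝ := Function.invFun (travelTime g)

section SeparationOfVariables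

variable {g : ℝ → ℝ} (hg : Continuous g) (hpos : ∀ v, 0 < g v)
include hg hpos

theorem hasDerivAt_travelTime (v : ℝ) : HasDerivAt (travelTime g) (g v)⁻¹ v :=
  hasDerivAt_Fint (hg.inv₀ fun v => (hpos v).ne') v

theorem continuous_travelTime : Continuous (travelTime g) :=
  continuous_iff_continuousAt.2 fun v => (hasDerivAt_travelTime hg hpos v).continuousAt

theorem strictMono_travelTime : StrictMono (travelTime g) :=
  strictMono_of_hasDerivAt_pos (hasDerivAt_travelTime hg hpos) fun v => inv_pos.2 (hpos v)

theorem isOpen_range_travelTime : IsOpen (range (travelTime g)) :=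
  isOpen_range_of_strictMono (continuous_travelTime hg hpos) (strictMono_travelTime hg hpos)

omit hg hpos in
theorem travelTime_zero : travelTime g 0 = 0 := by simp [travelTime, Fint]

theorem mem_range_travelTime_iff {x : ℝ} (hx : 0 ≤ x) :
    x ∈ range (travelTime g) ↔ ∃ n : ℕ, x < travelTime g n := by
  constructor
  · rintro ⟨v, rfl⟩
    obtain ⟨n, hn⟩ := exists_nat_gt v
    exact ⟨n, strictMono_travelTime hg hpos hn⟩
  · rintro ⟨n, hn⟩
    obtain ⟨v, -, hv⟩ := intermediate_value_Icc (Nat.cast_nonneg n)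
      (continuous_travelTime hg hpos).continuousOn ⟨travelTime_zero.trans_le hx, hn.le⟩
    exact ⟨v, hv⟩

omit hg hpos in
theorem travelTime_separatedSolution {x : ℝ} (hx : x ∈ range (travelTime g)) :
    travelTime g (separatedSolution g x) = x :=
  Function.invFun_eq hx

theorem separatedSolution_travelTime (v : ℝ) : separatedSolution g (travelTime g v) = v :=
  Function.leftInverse_invFun (strictMono_travelTime hg hpos).injective v

theorem le_separatedSolution_iff {x : ℝ} (hx : x ∈ range (travelTime g)) (v : ℝ) :
    v ≤ separatedSolution g x ↔ travelTime g v ≤ x := by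
  rw [← (strictMono_travelTime hg hpos).le_iff_le, travelTime_separatedSolution hx]

theorem separatedSolution_zero : separatedSolution g 0 = 0 := by
  simpa [travelTime_zero] using separatedSolution_travelTime hg hpos 0

theorem continuousAt_separatedSolution {x : ℝ} (hx : x ∈ range (travelTime g)) :
    ContinuousAt (separatedSolution g) x := by
  have hmono : MonotoneOn (separatedSolution g) (range (travelTime g)) := fun y hy z hz hyz => by
    rwa [le_separatedSolution_iff hg hpos hz, travelTime_separatedSolution hy]
  have himage : separatedSolution g '' range (travelTime g) = univ :=
    eq_univ_of_forall fun v => ⟨_, mem_range_self v, separatedSolution_travelTime hg hpos v⟩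
  exact continuousAt_of_monotoneOn_of_image_mem_nhds hmono
    ((isOpen_range_travelTime hg hpos).mem_nhds hx) (himage ▸ univ_mem)

theorem hasDerivAt_separatedSolution {x : ℝ} (hx : x ∈ range (travelTime g)) :
    HasDerivAt (separatedSolution g) (g (separatedSolution g x)) x := by
  simpa using (hasDerivAt_travelTime hg hpos _).of_local_left_inverse
    (continuousAt_separatedSolution hg hpos hx) (inv_ne_zero (hpos _).ne')
    (eventually_of_mem ((isOpen_range_travelTime hg hpos).mem_nhds hx) fun _ hy =>
      travelTime_separatedSolution hy)

theorem hasDerivAt_deriv_separatedSolution {g' : ℝ → ℝ} (hg' : ∀ v, HasDerivAt g (g' v) v)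
    {x : ℝ} (hx : x ∈ range (travelTime g)) :
    HasDerivAt (deriv (separatedSolution g))
      (g' (separatedSolution g x) * g (separatedSolution g x)) x := by
  refine ((hg' _).comp x (hasDerivAt_separatedSolution hg hpos hx)).congr_of_eventuallyEq ?_
  filter_upwards [(isOpen_range_travelTime hg hpos).mem_nhds hx] with y hy
  exact (hasDerivAt_separatedSolution hg hpos hy).deriv

/-- `travelTime g ∘ W - id` has derivative zero. -/
theorem eq_separatedSolution_of_hasDerivAt {W : ℝ → ℝ} {x : ℝ} (hx : 0 ≤ x) (hW0 : W 0 = 0)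
    (hW : ∀ y ∈ Icc 0 x, HasDerivAt W (g (W y)) y) : W x = separatedSolution g x := by
  have hconst := eq_of_hasDerivAt_zero_on_Icc (φ := fun y => travelTime g (W y) - y) fun y hy => by
    refine (((hasDerivAt_travelTime hg hpos (W y)).comp y (hW y hy)).fun_sub
      (hasDerivAt_id y)).congr_deriv ?_
    rw [inv_mul_cancel₀ (hpos (W y)).ne', sub_self]
  have hx' : travelTime g (W x) = x := by
    simpa [hW0, travelTime_zero, sub_eq_zero] using hconst x ⟨hx, le_rfl⟩
  rw [← separatedSolution_travelTime hg hpos (W x), hx']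

end SeparationOfVariables

section TravelTimeLimit

variable {g : ℝ → ℝ} (hg : Continuous g) (hpos : ∀ v, 0 < g v)
include hg hpos

theorem lintegral_Ioi_inv_eq_iSup_travelTime :
    ∫⁻ r in Ioi 0, ENNReal.ofReal (g r)⁻¹ = ⨆ n : ℕ, ENNReal.ofReal (travelTime g n) := by
  have hunion : ⋃ n : ℕ, Ioc (0 : ℝ) n = Ioi 0 :=
    iUnion_Ioc_eq_Ioi_self_iff.2 fun x _ => exists_nat_ge x
  rw [← hunion, setLIntegral_iUnion_of_directed _
    (Monotone.directed_le fun m n h => Ioc_subset_Ioc_right (Nat.cast_le.2 h))]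
  refine iSup_congr fun n => ?_
  rw [travelTime, Fint, intervalIntegral.integral_of_le (Nat.cast_nonneg n)]
  exact (ofReal_integral_eq_lintegral_ofReal
    (hg.inv₀ fun v => (hpos v).ne').integrableOn_Ioc
    (Eventually.of_forall fun r => inv_nonneg.2 (hpos r).le)).symm

theorem ofReal_lt_lintegral_Ioi_inv_iff {x : ℝ} (hx : 0 ≤ x) :
    ENNReal.ofReal x < ∫⁻ r in Ioi 0, ENNReal.ofReal (g r)⁻¹ ↔ x ∈ range (travelTime g) := by
  simp only [lintegral_Ioi_inv_eq_iSup_travelTime hg hpos, lt_iSup_iff,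
    ENNReal.ofReal_lt_ofReal_iff_of_nonneg hx, mem_range_travelTime_iff hg hpos hx]

theorem tendsto_separatedSolution {ℓ : ℝ≥0∞}
    (hℓ : ∀ x, 0 ≤ x → (ENNReal.ofReal x < ℓ ↔ x ∈ range (travelTime g))) :
    Tendsto (separatedSolution g) (if ℓ = ⊤ then atTop else 𝓝[<] ℓ.toReal) atTop := by
  have hmono := (strictMono_travelTime hg hpos).monotone
  refine tendsto_atTop.2 fun b => ?_
  have key : ∀ x, 0 ≤ x → ENNReal.ofReal x < ℓ → travelTime g b ≤ x →
      b ≤ separatedSolution g x := fun x hx hxℓ hbx =>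
    (le_separatedSolution_iff hg hpos ((hℓ x hx).1 hxℓ) b).2 hbx
  split_ifs with htop
  · filter_upwards [eventually_ge_atTop (max (travelTime g b) 0)] with x hx
    exact key x (le_of_max_le_right hx) (htop ▸ ENNReal.ofReal_lt_top) (le_of_max_le_left hx)
  · set t := travelTime g (max b 0)
    have ht0 : 0 ≤ t := travelTime_zero (g := g) ▸ hmono (le_max_right b 0)
    have htℓ : t < ℓ.toReal :=
      (ENNReal.ofReal_lt_iff_lt_toReal ht0 htop).1 ((hℓ t ht0).2 (mem_range_self _))
    filter_upwards [Ioo_mem_nhdsLT htℓ] with x hx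
    have hx0 : 0 ≤ x := ht0.trans hx.1.le
    exact key x hx0 ((ENNReal.ofReal_lt_iff_lt_toReal hx0 htop).2 hx.2)
      ((hmono (le_max_left b 0)).trans hx.1.le)

end TravelTimeLimit

theorem nonneg_on_Icc_of_hasDerivAt_nonneg {W W' : ℝ → ℝ} {t : ℝ} (hW0 : W 0 = 0)
    (hW : ∀ y ∈ Icc 0 t, HasDerivAt W (W' y) y) (hW' : ∀ y ∈ Icc 0 t, 0 ≤ W' y) :
    ∀ y ∈ Icc 0 t, 0 ≤ W y := fun _ hy =>
  hW0 ▸ monotoneOn_of_hasDerivWithinAt_nonneg (convex_Icc 0 t)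
    (fun z hz => (hW z hz).continuousAt.continuousWithinAt)
    (fun z hz => (hW z (interior_subset hz)).hasDerivWithinAt)
    (fun z hz => hW' z (interior_subset hz)) ⟨le_rfl, hy.1.trans hy.2⟩ hy hy.1

/-- Extending `f` to the left lets the solution live on all of `ℝ` (as `x ↦ α x` for `x ≤ 0`),
so that its derivatives at `0` are two-sided. -/
def extendLeft (f : ℝ → ℝ) (v : ℝ) : ℝ := f (max v 0)

/-- The first integral `(v')² = α² - 2F(v)` gives the speed of a solution at position `v`. -/
def speed (f : ℝ → ℝ) (α v : ℝ) : ℝ := √(α ^ 2 - 2 * Fint (extendLeft f) v)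

section Speed

variable {f : ℝ → ℝ} {α : ℝ}

theorem continuous_extendLeft (hf : ContinuousOn f (Ici 0)) : Continuous (extendLeft f) :=
  hf.comp_continuous (continuous_id.max continuous_const) fun v => le_max_right v 0

theorem Fint_extendLeft_of_nonneg {v : ℝ} (hv : 0 ≤ v) : Fint (extendLeft f) v = Fint f v :=
  intervalIntegral.integral_congr fun s hs => by
    rw [uIcc_of_le hv] at hs
    simp [extendLeft, max_eq_left hs.1]

theorem Fint_extendLeft_of_nonpos (hf0 : f 0 = 0) {v : ℝ} (hv : v ≤ 0) :
    Fint (extendLeft f) v = 0 := by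
  have : EqOn (extendLeft f) 0 (uIcc 0 v) := fun s hs => by
    rw [uIcc_of_ge hv] at hs
    simp [extendLeft, max_eq_right hs.2, hf0]
  simp [Fint, intervalIntegral.integral_congr this]

theorem two_mul_Fint_extendLeft_lt (hα : 0 < α) (hf0 : f 0 = 0)
    (h : ∀ v, 0 < v → 2 * Fint f v < α ^ 2) (v : ℝ) : 2 * Fint (extendLeft f) v < α ^ 2 := by
  rcases lt_or_ge 0 v with hv | hv
  · rw [Fint_extendLeft_of_nonneg hv.le]
    exact h v hv
  · rw [Fint_extendLeft_of_nonpos hf0 hv, mul_zero]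
    positivity

theorem speed_zero (hα : 0 < α) : speed f α 0 = α := by
  simp [speed, Fint, Real.sqrt_sq hα.le]

variable (hP : ∀ v, 2 * Fint (extendLeft f) v < α ^ 2)
include hP

theorem speed_pos (v : ℝ) : 0 < speed f α v :=
  Real.sqrt_pos.2 (by linarith [hP v])

theorem speed_sq (v : ℝ) : speed f α v ^ 2 = α ^ 2 - 2 * Fint (extendLeft f) v :=
  Real.sq_sqrt (by linarith [hP v])

variable (hf : ContinuousOn f (Ici 0))
include hf

theorem hasDerivAt_speed (v : ℝ) :
    HasDerivAt (speed f α) (-extendLeft f v / speed f α v) v := by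
  have h := (((hasDerivAt_Fint (continuous_extendLeft hf) v).const_mul 2).const_sub (α ^ 2)).sqrt
    (by linarith [hP v])
  exact h.congr_deriv (by rw [speed]; ring)

theorem continuous_speed : Continuous (speed f α) :=
  continuous_iff_continuousAt.2 fun v => (hasDerivAt_speed hP hf v).continuousAt

theorem separatedSolution_speed_solves {x : ℝ} (hx0 : 0 ≤ x)
    (hx : x ∈ range (travelTime (speed f α))) :
    HasDerivAt (separatedSolution (speed f α)) (deriv (separatedSolution (speed f α)) x) x ∧
      HasDerivAt (deriv (separatedSolution (speed f α)))
        (-f (separatedSolution (speed f α) x)) x ∧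
      0 < deriv (separatedSolution (speed f α)) x := by
  have hg := continuous_speed hP hf
  have hV := hasDerivAt_separatedSolution hg (speed_pos hP) hx
  have hVnn : 0 ≤ separatedSolution (speed f α) x :=
    (le_separatedSolution_iff hg (speed_pos hP) hx 0).2 (by rwa [travelTime_zero])
  refine ⟨hV.deriv.symm ▸ hV, ?_, hV.deriv ▸ speed_pos hP _⟩
  refine (hasDerivAt_deriv_separatedSolution hg (speed_pos hP) (hasDerivAt_speed hP hf) hx
    ).congr_deriv ?_
  rw [div_mul_cancel₀ _ (speed_pos hP _).ne', extendLeft, max_eq_left hVnn]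

variable {W : ℝ → ℝ} (hW0 : W 0 = 0) (hW1 : deriv W 0 = α)
include hW0 hW1

theorem sq_deriv_eq_speed_sq {t : ℝ} (ht : 0 ≤ t)
    (hW : ∀ y ∈ Icc 0 t, HasDerivAt W (deriv W y) y)
    (hW' : ∀ y ∈ Icc 0 t, HasDerivAt (deriv W) (-f (W y)) y)
    (hnn : ∀ y ∈ Icc 0 t, 0 ≤ W y) : deriv W t ^ 2 = speed f α (W t) ^ 2 := by
  have hF : ∀ y ∈ Icc 0 t, HasDerivAt (Fint (extendLeft f)) (f (W y)) (W y) := fun y hy => by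
    simpa [extendLeft, max_eq_left (hnn y hy)] using
      hasDerivAt_Fint (continuous_extendLeft hf) (W y)
  have hE := energy_eq_of_hasDerivAt hW hW' hF t ⟨ht, le_rfl⟩
  have hF0 : Fint (extendLeft f) 0 = 0 := intervalIntegral.integral_same
  rw [hW0, hW1, hF0, mul_zero, add_zero] at hE
  rw [speed_sq hP]
  linarith

/-- Along a solution the speed cannot vanish while the solution is nonnegative, so the
velocity stays positive and equals `speed f α (W y)`. -/
theorem deriv_eq_speed (hα : 0 < α) {x : ℝ}
    (hW : ∀ y ∈ Icc 0 x, HasDerivAt W (deriv W y) y)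
    (hW' : ∀ y ∈ Icc 0 x, HasDerivAt (deriv W) (-f (W y)) y) :
    ∀ y ∈ Icc 0 x, deriv W y = speed f α (W y) := by
  have hsq : ∀ t ∈ Icc 0 x, (∀ y ∈ Icc 0 t, 0 ≤ deriv W y) →
      deriv W t ^ 2 = speed f α (W t) ^ 2 := fun t ht hd =>
    have hsub : Icc 0 t ⊆ Icc 0 x := Icc_subset_Icc_right ht.2
    sq_deriv_eq_speed_sq hP hf hW0 hW1 ht.1 (fun y hy => hW y (hsub hy))
      (fun y hy => hW' y (hsub hy))
      (nonneg_on_Icc_of_hasDerivAt_nonneg hW0 (fun y hy => hW y (hsub hy)) hd)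
  have hpos : ∀ y ∈ Icc 0 x, 0 < deriv W y :=
    pos_on_Icc_of_ne_zero_of_nonneg_before
      (fun y hy => (hW' y hy).continuousAt.continuousWithinAt) (hW1 ▸ hα) fun t ht hd h0 => by
        have := hsq t ht hd
        rw [h0, zero_pow two_ne_zero] at this
        exact (pow_pos (speed_pos hP (W t)) 2).ne' this.symm
  intro y hy
  refine (pow_left_inj₀ (hpos y hy).le (speed_pos hP _).le two_ne_zero).1 (hsq y hy ?_)
  exact fun z hz => (hpos z ⟨hz.1, hz.2.trans hy.2⟩).le

end Speed

/-- Lemma 2.7 (iii): in the case `α > α₀`, or `α = α₀` with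
`α₀² > 2F(v)` for all `v > 0` (cases expressed without `sup` by: `∃ β < α²` bounding
`2F` on `[0,∞)`, respectively `2F < α²` on `(0,∞)` with `α²` the least upper bound), or
when `sup_{v>0} F(v) ≤ 0`, the stationary problem `v'' + f(v) = 0`, `v(0) = 0`,
`v'(0) = α` has a unique solution `V̂_α`, defined exactly on `[0, ℓ)` where
`ℓ = ∫₀^∞ dr/√(α² - 2F(r)) ∈ (0, ∞]`, strictly increasing, and blowing up to `∞`
as `x → ℓ`. -/
theorem statement13 (f : ℝ → ℝ) (α : ℝ) (hα : 0 < α)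
    (hf : ContDiffOn ℝ 1 f (Ici 0)) (hf0 : f 0 = 0)
    (hcase :
      ((∃ v : ℝ, 0 < v ∧ 0 < Fint f v) ∧
        ((∃ β : ℝ, β < α ^ 2 ∧ ∀ v : ℝ, 0 ≤ v → 2 * Fint f v ≤ β) ∨
          ((∀ v : ℝ, 0 < v → 2 * Fint f v < α ^ 2) ∧
            (∀ β : ℝ, β < α ^ 2 → ∃ v : ℝ, 0 < v ∧ β < 2 * Fint f v)))) ∨
      (∀ v : ℝ, 0 < v → Fint f v ≤ 0))
    (ℓ : ℝ≥0∞)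
    (hℓ : ℓ = ∫⁻ r in Ioi (0:ℝ), ENNReal.ofReal ((Real.sqrt (α ^ 2 - 2 * Fint f r))⁻¹)) :
    ∃ V : ℝ → ℝ, V 0 = 0 ∧ deriv V 0 = α ∧
      (∀ x : ℝ, 0 ≤ x → ENNReal.ofReal x < ℓ →
        HasDerivAt V (deriv V x) x ∧ HasDerivAt (deriv V) (-(f (V x))) x ∧
          0 < deriv V x) ∧
      (∀ W : ℝ → ℝ, W 0 = 0 → deriv W 0 = α →
        (∀ x : ℝ, 0 ≤ x → ENNReal.ofReal x < ℓ →
          HasDerivAt W (deriv W x) x ∧ HasDerivAt (deriv W) (-(f (W x))) x) →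
        ∀ x : ℝ, 0 ≤ x → ENNReal.ofReal x < ℓ → W x = V x) ∧
      Tendsto V (if ℓ = ⊤ then atTop else 𝓝[<] ℓ.toReal) atTop := by
  have hP : ∀ v, 2 * Fint (extendLeft f) v < α ^ 2 :=
    two_mul_Fint_extendLeft_lt hα hf0 fun v hv => by
      rcases hcase with ⟨-, ⟨β, hβ, hβF⟩ | ⟨hlt, -⟩⟩ | hneg
      · linarith [hβF v hv.le]
      · exact hlt v hv
      · nlinarith [hneg v hv]
  have hfc := hf.continuousOn
  have hg := continuous_speed hP hfc
  have hpos := speed_pos hP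
  have hdom : ∀ x, 0 ≤ x → (ENNReal.ofReal x < ℓ ↔ x ∈ range (travelTime (speed f α))) := by
    have : ℓ = ∫⁻ r in Ioi 0, ENNReal.ofReal (speed f α r)⁻¹ :=
      hℓ.trans <| setLIntegral_congr_fun measurableSet_Ioi fun r hr => by
        rw [speed, Fint_extendLeft_of_nonneg (le_of_lt hr)]
    exact this ▸ fun x hx => ofReal_lt_lintegral_Ioi_inv_iff hg hpos hx
  refine ⟨separatedSolution (speed f α), separatedSolution_zero hg hpos, ?_,
    fun x hx hxℓ => separatedSolution_speed_solves hP hfc hx ((hdom x hx).1 hxℓ), ?_,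
    tendsto_separatedSolution hg hpos hdom⟩
  · rw [(hasDerivAt_separatedSolution hg hpos ⟨0, travelTime_zero⟩).deriv,
      separatedSolution_zero hg hpos, speed_zero hα]
  · intro W hW0 hW1 hW x hx hxℓ
    have hWx : ∀ y ∈ Icc 0 x, HasDerivAt W (deriv W y) y ∧
        HasDerivAt (deriv W) (-f (W y)) y := fun y hy =>
      hW y hy.1 ((ENNReal.ofReal_le_ofReal hy.2).trans_lt hxℓ)
    refine eq_separatedSolution_of_hasDerivAt hg hpos hx hW0 fun y hy => ?_
    exact (hWx y hy).1.congr_deriv (deriv_eq_speed hP hfc hW0 hW1 hα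
      (fun y hy => (hWx y hy).1) (fun y hy => (hWx y hy).2) y hy)
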